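/- arXiv:1210.8223 — 4 statements merged into one kernel-verified Lean document; each statement's English description precedes it below -/
import Mathlib

section
/- Every r×n latin rectangle (r ≤ n) can be completed to an n×n latin square. -/
open Finset

private lemma aux_bijOn_of_injOn_mapsTo {s : Finset ℕ} {f : ℕ → ℕ}
    (hm : ∀ x ∈ s, f x ∈ s) (hi : Set.InjOn f ↑s) : Set.BijOn f ↑s ↑s := by
  classical
  have himg : s.image f = s := by
    apply Finset.eq_of_subset_of_card_le
    · intro y hy
      obtain ⟨x, hx, rfl⟩ := Finset.mem_image.mp hy
      exact hm x hx
    · rw [Finset.card_image_of_injOn hi]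
  refine ⟨fun x hx => hm x hx, hi, ?_⟩
  intro y hy
  rw [← Finset.coe_image, himg]
  exact hy

/-- Each symbol `s ∈ Icc 1 n` appears in exactly `r` columns of the rectangle. -/
private lemma aux_count_cols (n r : ℕ) (R : ℕ → ℕ → ℕ)
    (hrow : ∀ i ∈ Finset.Icc 1 r,
      Set.BijOn (R i) ↑(Finset.Icc 1 n) ↑(Finset.Icc 1 n))
    (hcol : ∀ j ∈ Finset.Icc 1 n,
      Set.InjOn (fun i => R i j) ↑(Finset.Icc 1 r))
    (s : ℕ) (hs : s ∈ Finset.Icc 1 n) :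
    ((Finset.Icc 1 n).filter
      (fun j => s ∈ (Finset.Icc 1 r).image (fun i => R i j))).card = r := by
  classical
  have hchoice : ∀ i ∈ Finset.Icc 1 r, ∃ j, j ∈ Finset.Icc 1 n ∧ R i j = s := by
    intro i hi
    obtain ⟨j, hj, hji⟩ := (hrow i hi).surjOn hs
    exact ⟨j, hj, hji⟩
  set g : ℕ → ℕ :=
    fun i => if hi : i ∈ Finset.Icc 1 r then (hchoice i hi).choose else 0 with hg
  have hgspec : ∀ i (hi : i ∈ Finset.Icc 1 r),
      g i ∈ Finset.Icc 1 n ∧ R i (g i) = s := by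
    intro i hi
    simp only [hg, dif_pos hi]
    exact (hchoice i hi).choose_spec
  have hinj : Set.InjOn g ↑(Finset.Icc 1 r) := by
    intro i₁ h₁ i₂ h₂ h
    have h₁' : i₁ ∈ Finset.Icc 1 r := h₁
    have h₂' : i₂ ∈ Finset.Icc 1 r := h₂
    apply hcol (g i₁) (hgspec i₁ h₁').1 h₁ h₂
    show R i₁ (g i₁) = R i₂ (g i₁)
    rw [(hgspec i₁ h₁').2, h, (hgspec i₂ h₂').2]
  have himg : (Finset.Icc 1 n).filter
      (fun j => s ∈ (Finset.Icc 1 r).image (fun i => R i j))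
      = (Finset.Icc 1 r).image g := by
    ext j
    simp only [Finset.mem_filter, Finset.mem_image]
    constructor
    · rintro ⟨hjn, i, hi, hR⟩
      refine ⟨i, hi, ?_⟩
      exact (hrow i hi).injOn (hgspec i hi).1 hjn (by rw [(hgspec i hi).2, hR])
    · rintro ⟨i, hi, rfl⟩
      exact ⟨(hgspec i hi).1, i, hi, (hgspec i hi).2⟩
  rw [himg, Finset.card_image_of_injOn hinj, Nat.card_Icc]
  omega

/-- A latin rectangle with strictly fewer than `n` rows can be extended by one row. -/
private lemma aux_extend_row (n r : ℕ) (hrn : r < n) (R : ℕ → ℕ → ℕ)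
    (hrow : ∀ i ∈ Finset.Icc 1 r,
      Set.BijOn (R i) ↑(Finset.Icc 1 n) ↑(Finset.Icc 1 n))
    (hcol : ∀ j ∈ Finset.Icc 1 n,
      Set.InjOn (fun i => R i j) ↑(Finset.Icc 1 r)) :
    ∃ R' : ℕ → ℕ → ℕ,
      (∀ i, i ≠ r + 1 → ∀ j, R' i j = R i j) ∧
      (∀ i ∈ Finset.Icc 1 (r + 1),
        Set.BijOn (R' i) ↑(Finset.Icc 1 n) ↑(Finset.Icc 1 n)) ∧
      (∀ j ∈ Finset.Icc 1 n,
        Set.InjOn (fun i => R' i j) ↑(Finset.Icc 1 (r + 1))) := by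
  classical
  set A : ℕ → Finset ℕ :=
    fun j => Finset.Icc 1 n \ ((Finset.Icc 1 r).image fun i => R i j) with hA
  have hAsub : ∀ j, A j ⊆ Finset.Icc 1 n := fun j => Finset.sdiff_subset
  have hAcard : ∀ j ∈ Finset.Icc 1 n, (A j).card = n - r := by
    intro j hj
    rw [hA]
    rw [Finset.card_sdiff_of_subset]
    · rw [Finset.card_image_of_injOn (hcol j hj), Nat.card_Icc, Nat.card_Icc]
      omega
    · intro x hx
      obtain ⟨i, hi, rfl⟩ := Finset.mem_image.mp hx
      exact (hrow i hi).mapsTo hj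
  -- count, for a symbol x ∈ Icc 1 n, the columns whose candidate set contains x
  have hxcount : ∀ x ∈ Finset.Icc 1 n,
      ((Finset.Icc 1 n).filter (fun j => x ∈ A j)).card = n - r := by
    intro x hx
    have h1 : (Finset.Icc 1 n).filter (fun j => x ∈ A j)
        = (Finset.Icc 1 n).filter
            (fun j => ¬ x ∈ (Finset.Icc 1 r).image (fun i => R i j)) := by
      apply Finset.filter_congr
      intro j hj
      simp [hA, hx]
    have h2 := Finset.card_filter_add_card_filter_not
      (s := Finset.Icc 1 n)
      (p := fun j => x ∈ (Finset.Icc 1 r).image (fun i => R i j))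
    rw [aux_count_cols n r R hrow hcol x hx] at h2
    rw [h1]
    rw [Nat.card_Icc] at h2
    omega
  -- Hall's condition
  have hall : ∀ S : Finset {j // j ∈ Finset.Icc 1 n},
      S.card ≤ (S.biUnion (fun j => A j.1)).card := by
    intro S
    set U := S.biUnion (fun j => A j.1) with hU
    have hsum : S.card * (n - r) ≤ U.card * (n - r) := by
      have e1 : S.card * (n - r) = ∑ j ∈ S, (A j.1).card := by
        rw [Finset.sum_congr rfl (fun j _ => hAcard j.1 j.2), Finset.sum_const,
          smul_eq_mul]
      have e2 : ∀ j ∈ S, (A j.1).card = (U.filter (fun x => x ∈ A j.1)).card := by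
        intro j hj
        have hfe : U.filter (fun x => x ∈ A j.1) = A j.1 := by
          ext x
          simp only [Finset.mem_filter]
          exact ⟨fun h => h.2, fun h => ⟨Finset.mem_biUnion.mpr ⟨j, hj, h⟩, h⟩⟩
        rw [hfe]
      have e3 : ∑ j ∈ S, (A j.1).card
          = ∑ x ∈ U, (S.filter (fun j => x ∈ A j.1)).card := by
        rw [Finset.sum_congr rfl e2]
        simp only [Finset.card_filter]
        exact Finset.sum_comm
      have e4 : ∀ x ∈ U, (S.filter (fun j => x ∈ A j.1)).card ≤ n - r := by
        intro x hx
        obtain ⟨j₀, _, hxj₀⟩ := Finset.mem_biUnion.mp hx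
        have hxn : x ∈ Finset.Icc 1 n := hAsub _ hxj₀
        calc (S.filter (fun j => x ∈ A j.1)).card
            ≤ ((Finset.Icc 1 n).filter (fun j => x ∈ A j)).card := by
              apply Finset.card_le_card_of_injOn (fun j => j.1)
              · intro j hj
                obtain ⟨hjS, hjA⟩ := Finset.mem_filter.mp hj
                exact Finset.mem_filter.mpr ⟨j.2, hjA⟩
              · intro a _ b _ h
                exact Subtype.ext h
          _ = n - r := hxcount x hxn
      calc S.card * (n - r) = ∑ j ∈ S, (A j.1).card := e1
        _ = ∑ x ∈ U, (S.filter (fun j => x ∈ A j.1)).card := e3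
        _ ≤ ∑ x ∈ U, (n - r) := Finset.sum_le_sum e4
        _ = U.card * (n - r) := by rw [Finset.sum_const, smul_eq_mul]
    exact Nat.le_of_mul_le_mul_right hsum (by omega)
  obtain ⟨f, hfinj, hfmem⟩ :=
    (Finset.all_card_le_biUnion_card_iff_exists_injective
      (fun j : {j // j ∈ Finset.Icc 1 n} => A j.1)).mp hall
  set newrow : ℕ → ℕ := fun j =>
    if h : j ∈ Finset.Icc 1 n then f ⟨j, h⟩ else 0 with hnew
  set R' : ℕ → ℕ → ℕ := fun i j => if i = r + 1 then newrow j else R i j with hR'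
  have hagree : ∀ i, i ≠ r + 1 → ∀ j, R' i j = R i j := by
    intro i hi j
    simp [hR', hi]
  have hnewmem : ∀ j (hj : j ∈ Finset.Icc 1 n), newrow j ∈ A j := by
    intro j hj
    simp only [hnew, dif_pos hj]
    exact hfmem ⟨j, hj⟩
  refine ⟨R', hagree, ?_, ?_⟩
  · intro i hi
    rcases eq_or_ne i (r + 1) with rfl | hne
    · have hfun : R' (r + 1) = newrow := funext fun j => if_pos rfl
      rw [hfun]
      apply aux_bijOn_of_injOn_mapsTo
      · intro j hj
        exact hAsub j (hnewmem j hj)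
      · intro a ha b hb hab
        have ha' : a ∈ Finset.Icc 1 n := ha
        have hb' : b ∈ Finset.Icc 1 n := hb
        simp only [hnew, dif_pos ha', dif_pos hb'] at hab
        have := hfinj hab
        exact congrArg Subtype.val this
    · have hir : i ∈ Finset.Icc 1 r := by
        rw [Finset.mem_Icc] at hi ⊢
        omega
      have hfun : R' i = R i := funext fun j => if_neg hne
      rw [hfun]
      exact hrow i hir
  · intro j hj a ha b hb hab
    have hj' : j ∈ Finset.Icc 1 n := hj
    have ha' : a ∈ Finset.Icc 1 (r + 1) := ha
    have hb' : b ∈ Finset.Icc 1 (r + 1) := hb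
    rw [Finset.mem_Icc] at ha' hb'
    have hnotin : newrow j ∉ (Finset.Icc 1 r).image (fun i => R i j) :=
      (Finset.mem_sdiff.mp (hnewmem j hj')).2
    simp only [hR'] at hab
    rcases eq_or_ne a (r + 1) with rfl | hane
    · rcases eq_or_ne b (r + 1) with rfl | hbne
      · rfl
      · exfalso
        rw [if_pos rfl, if_neg hbne] at hab
        exact hnotin (Finset.mem_image.mpr
          ⟨b, Finset.mem_Icc.mpr ⟨hb'.1, by omega⟩, hab.symm⟩)
    · rcases eq_or_ne b (r + 1) with rfl | hbne
      · exfalso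
        rw [if_neg hane, if_pos rfl] at hab
        exact hnotin (Finset.mem_image.mpr
          ⟨a, Finset.mem_Icc.mpr ⟨ha'.1, by omega⟩, hab⟩)
      · rw [if_neg hane, if_neg hbne] at hab
        exact hcol j hj (Finset.mem_Icc.mpr ⟨ha'.1, by omega⟩)
          (Finset.mem_Icc.mpr ⟨hb'.1, by omega⟩) hab

/-- The case `r = n`: the rectangle is already a latin square. -/
private lemma aux_full (n : ℕ) (R : ℕ → ℕ → ℕ)
    (hrow : ∀ i ∈ Finset.Icc 1 n,
      Set.BijOn (R i) ↑(Finset.Icc 1 n) ↑(Finset.Icc 1 n))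
    (hcol : ∀ j ∈ Finset.Icc 1 n,
      Set.InjOn (fun i => R i j) ↑(Finset.Icc 1 n)) :
    ∃ L : ℕ → ℕ → ℕ,
      (∀ i ∈ Finset.Icc 1 n, ∀ j ∈ Finset.Icc 1 n, L i j = R i j) ∧
      (∀ i ∈ Finset.Icc 1 n,
        Set.BijOn (L i) ↑(Finset.Icc 1 n) ↑(Finset.Icc 1 n)) ∧
      (∀ j ∈ Finset.Icc 1 n,
        Set.BijOn (fun i => L i j) ↑(Finset.Icc 1 n) ↑(Finset.Icc 1 n)) := by
  refine ⟨R, fun i _ j _ => rfl, hrow, ?_⟩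
  intro j hj
  apply aux_bijOn_of_injOn_mapsTo
  · intro i hi
    exact (hrow i hi).mapsTo hj
  · exact hcol j hj

/-- Hall's theorem: every `r × n` latin rectangle (each row a permutation of
`{1,…,n}`, no symbol repeated in a column) can be completed to an `n × n`
latin square. -/
theorem latin_rectangle_completable (n r : ℕ) (hrn : r ≤ n) (R : ℕ → ℕ → ℕ)
    (hrow : ∀ i ∈ Finset.Icc 1 r,
      Set.BijOn (R i) ↑(Finset.Icc 1 n) ↑(Finset.Icc 1 n))
    (hcol : ∀ j ∈ Finset.Icc 1 n,
      Set.InjOn (fun i => R i j) ↑(Finset.Icc 1 r)) :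
    ∃ L : ℕ → ℕ → ℕ,
      (∀ i ∈ Finset.Icc 1 r, ∀ j ∈ Finset.Icc 1 n, L i j = R i j) ∧
      (∀ i ∈ Finset.Icc 1 n,
        Set.BijOn (L i) ↑(Finset.Icc 1 n) ↑(Finset.Icc 1 n)) ∧
      (∀ j ∈ Finset.Icc 1 n,
        Set.BijOn (fun i => L i j) ↑(Finset.Icc 1 n) ↑(Finset.Icc 1 n)) := by
  classical
  obtain ⟨k, hk⟩ : ∃ k, n - r ≤ k := ⟨n - r, le_rfl⟩
  induction k generalizing r R with
  | zero =>
    have : r = n := by omega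
    subst this
    exact aux_full r R hrow hcol
  | succ k ih =>
    rcases eq_or_lt_of_le hrn with rfl | hlt
    · exact aux_full r R hrow hcol
    · obtain ⟨R', hagree, hrow', hcol'⟩ := aux_extend_row n r hlt R hrow hcol
      obtain ⟨L, hL1, hL2, hL3⟩ := ih (r + 1) hlt R' hrow' hcol' (by omega)
      refine ⟨L, ?_, hL2, hL3⟩
      intro i hi j hj
      have hi' : i ∈ Finset.Icc 1 (r + 1) := by
        rw [Finset.mem_Icc] at hi ⊢
        omega
      have hir : i ≠ r + 1 := by
        rw [Finset.mem_Icc] at hi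
        omega
      rw [hL1 i hi' j hj, hagree i hir j]
end

section
/- Let 1 ≤ k < n/2. If S is an n×n partial latin square whose first k rows are completely filled, whose row k+1 contains at most n−2k filled cells, and which has no other filled cells, then S can be extended to a partial latin square in which the first k+1 rows are completely filled. -/
/-!
Fill the empty cells of row `k + 1` by a system of distinct representatives. An empty cell `j`
may take any symbol missing from row `k + 1` and from the top `k` cells of column `j`; if `m`
cells of the row are filled, at least `n - m - k ≥ k` symbols remain available at each empty
cell, and every symbol missing from the row is blocked in at most `k` columns (once per row
above). Hence any `t ≤ k` empty cells see at least `k` symbols, any `t > k` empty cells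
together see every one of the `≥ n - m ≥ t` symbols missing from the row, and Hall's theorem
applies.
-/

/-- A partial latin square of order `n`: cells (indexed by `1..n × 1..n`) are
empty (`none`) or filled with a symbol of `{1,…,n}`, no symbol repeated in a
row or column. -/
def IsPLS (n : ℕ) (S : ℕ → ℕ → Option ℕ) : Prop :=
  (∀ i j s, S i j = some s →
      i ∈ Finset.Icc 1 n ∧ j ∈ Finset.Icc 1 n ∧ s ∈ Finset.Icc 1 n) ∧
  (∀ i j j' s, S i j = some s → S i j' = some s → j = j') ∧
  (∀ i i' j s, S i j = some s → S i' j = some s → i = i')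

open Finset Function

theorem exists_injective_forall_mem_sdiff {ι α : Type*} [Fintype ι] [DecidableEq α]
    (N R : Finset α) (C : ι → Finset α) (k : ℕ)
    (hC : ∀ j, #(C j) ≤ k) (hmult : ∀ s, #{j | s ∈ C j} ≤ k)
    (hsmall : #R + 2 * k ≤ #N) (hlarge : Fintype.card ι + #R ≤ #N) :
    ∃ f : ι → α, Injective f ∧ ∀ j, f j ∈ N \ (R ∪ C j) := by
  refine (all_card_le_biUnion_card_iff_existsInjective' _).mp fun T => ?_
  rcases le_or_gt #T k with hTk | hkT
  · obtain rfl | ⟨j, hj⟩ := T.eq_empty_or_nonempty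
    · simp
    calc #T ≤ #N - (#R + #(C j)) := by have := hC j; omega
      _ ≤ #N - #(R ∪ C j) := Nat.sub_le_sub_left (card_union_le _ _) _
      _ ≤ #(N \ (R ∪ C j)) := le_card_sdiff _ _
      _ ≤ _ := card_le_card (subset_biUnion_of_mem (fun j => N \ (R ∪ C j)) hj)
  · have hcover : N \ R ⊆ T.biUnion fun j => N \ (R ∪ C j) := by
      intro s hs
      obtain ⟨j, hjT, hjs⟩ : ∃ j ∈ T, s ∉ C j := by
        by_contra! h
        have := card_le_card fun j hj => mem_filter.2 ⟨mem_univ j, h j hj⟩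
        have := hmult s
        omega
      rw [mem_sdiff] at hs
      simp only [mem_biUnion, mem_sdiff, mem_union, not_or]
      exact ⟨j, hjT, hs.1, hs.2, hjs⟩
    calc #T ≤ Fintype.card ι := card_le_univ T
      _ ≤ #N - #R := by omega
      _ ≤ #(N \ R) := le_card_sdiff _ _
      _ ≤ _ := card_le_card hcover

theorem Finset.card_biUnion_toFinset_le {ι α : Type*} [DecidableEq α] (s : Finset ι)
    (f : ι → Option α) :
    #(s.biUnion fun i => (f i).toFinset) ≤ #{i ∈ s | (f i).isSome} := by
  calc #(s.biUnion fun i => (f i).toFinset)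
      = #({i ∈ s | (f i).isSome}.biUnion fun i => (f i).toFinset) := by
        congr 1; ext; simp only [mem_biUnion, mem_filter, Option.mem_toFinset]; aesop
    _ ≤ #{i ∈ s | (f i).isSome} * 1 := card_biUnion_le_card_mul _ _ _ fun i _ => by
        cases f i <;> simp
    _ = _ := mul_one _

section LatinSquare

variable {n : ℕ} {S : ℕ → ℕ → Option ℕ}

def rowSymbols (n : ℕ) (S : ℕ → ℕ → Option ℕ) (r : ℕ) : Finset ℕ :=
  (Icc 1 n).biUnion fun j => (S r j).toFinset

def colSymbols (k : ℕ) (S : ℕ → ℕ → Option ℕ) (j : ℕ) : Finset ℕ :=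
  (Icc 1 k).biUnion fun i => (S i j).toFinset

def emptyCells (n : ℕ) (S : ℕ → ℕ → Option ℕ) (r : ℕ) : Finset ℕ :=
  {j ∈ Icc 1 n | S r j = none}

def fillRow (S : ℕ → ℕ → Option ℕ) (r : ℕ) {E : Finset ℕ} (f : E → ℕ) :
    ℕ → ℕ → Option ℕ :=
  fun i j => if h : i = r ∧ j ∈ E then some (f ⟨j, h.2⟩) else S i j

theorem card_emptyCells_add_card_filter_isSome (r : ℕ) :
    #(emptyCells n S r) + #{j ∈ Icc 1 n | (S r j).isSome} = n := by
  rw [add_comm, emptyCells]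
  simpa [Option.not_isSome_iff_eq_none] using
    card_filter_add_card_filter_not (s := Icc 1 n) fun j => (S r j).isSome

theorem card_rowSymbols_le (r : ℕ) :
    #(rowSymbols n S r) ≤ #{j ∈ Icc 1 n | (S r j).isSome} :=
  card_biUnion_toFinset_le _ _

theorem card_colSymbols_le (k j : ℕ) : #(colSymbols k S j) ≤ k :=
  (card_biUnion_toFinset_le _ _).trans <| (card_filter_le _ _).trans (by simp)

theorem IsPLS.card_filter_mem_colSymbols_le {ι : Type*} [Fintype ι] [DecidableEq ι]
    (hS : IsPLS n S) {c : ι → ℕ} (hc : Injective c) (k s : ℕ) :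
    #{x | s ∈ colSymbols k S (c x)} ≤ k := by
  have hsub :
      ({x | s ∈ colSymbols k S (c x)} : Finset ι) ⊆
        (Icc 1 k).biUnion fun i => {x | S i (c x) = some s} := by
    intro x hx
    simpa [colSymbols] using (mem_filter.1 hx).2
  have hrow (i : ℕ) : #{x | S i (c x) = some s} ≤ 1 :=
    card_le_one.2 fun x hx y hy => hc <| hS.2.1 i _ _ s (mem_filter.1 hx).2 (mem_filter.1 hy).2
  simpa using (card_le_card hsub).trans (card_biUnion_le_card_mul _ _ 1 fun i _ => hrow i)

theorem IsPLS.mem_colSymbols_of_mem_emptyCells (hS : IsPLS n S) {k : ℕ}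
    (hempty : ∀ i, k + 1 < i → ∀ j, S i j = none) {i j s : ℕ}
    (hj : j ∈ emptyCells n S (k + 1)) (h : S i j = some s) : s ∈ colSymbols k S j := by
  have hi := (hS.1 i j s h).1
  have hik : i ≠ k + 1 := by
    rintro rfl
    simp [emptyCells, h] at hj
  have : i ≤ k + 1 := by
    by_contra! hlt
    simp [hempty i hlt j] at h
  simp only [colSymbols, mem_biUnion, Option.mem_toFinset, Option.mem_def, mem_Icc] at hi ⊢
  exact ⟨i, ⟨hi.1, by omega⟩, h⟩

theorem fillRow_emptyCells_eq_of_eq_some {r i j s : ℕ} (f : emptyCells n S r → ℕ)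
    (h : S i j = some s) : fillRow S r f i j = some s := by
  rw [fillRow, dif_neg]
  · exact h
  · rintro ⟨rfl, hj⟩
    simp [emptyCells, h] at hj

theorem isSome_fillRow_emptyCells {r j : ℕ} (f : emptyCells n S r → ℕ) (hj : j ∈ Icc 1 n) :
    (fillRow S r f r j).isSome := by
  cases h : S r j with
  | none => simp [fillRow, emptyCells, hj, h]
  | some s => simp [fillRow_emptyCells_eq_of_eq_some f h]

theorem IsPLS.fillRow (hS : IsPLS n S) {r : ℕ} (hr : r ∈ Icc 1 n) {E : Finset ℕ}
    (hE : E ⊆ Icc 1 n) {f : E → ℕ} (hf : Injective f) (hfN : ∀ j, f j ∈ Icc 1 n)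
    (hfrow : ∀ j, f j ∉ rowSymbols n S r) (hfcol : ∀ (j : E) i, S i j ≠ some (f j)) :
    IsPLS n (fillRow S r f) := by
  obtain ⟨hbd, hrow, hcol⟩ := hS
  have hfrow' (j : E) (j' : ℕ) : S r j' ≠ some (f j) := fun h =>
    hfrow j <| by
      simp only [rowSymbols, mem_biUnion, Option.mem_toFinset, Option.mem_def]
      exact ⟨j', (hbd r j' _ h).2.1, h⟩
  refine ⟨fun i j s h => ?_, fun i j j' s h h' => ?_, fun i i' j s h h' => ?_⟩ <;>
    simp only [_root_.fillRow] at h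
  · split_ifs at h with hij
    · cases h
      exact ⟨hij.1 ▸ hr, hE hij.2, hfN _⟩
    · exact hbd i j s h
  · simp only [_root_.fillRow] at h'
    split_ifs at h h' with hij hij' hij'
    · cases h
      exact congrArg Subtype.val (hf (Option.some_inj.1 h')).symm
    · cases h
      obtain ⟨rfl, _⟩ := hij
      exact (hfrow' _ j' h').elim
    · cases h'
      obtain ⟨rfl, _⟩ := hij'
      exact (hfrow' _ j h).elim
    · exact hrow i j j' s h h'
  · simp only [_root_.fillRow] at h'
    split_ifs at h h' with hij hij' hij'
    · exact hij.1.trans hij'.1.symm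
    · cases h
      exact (hfcol ⟨j, hij.2⟩ i' h').elim
    · cases h'
      exact (hfcol ⟨j, hij'.2⟩ i h).elim
    · exact hcol i i' j s h h'

end LatinSquare

theorem pls_extend_row_general (n k : ℕ) (hkn : 2 * k < n)
    (S : ℕ → ℕ → Option ℕ) (hS : IsPLS n S)
    (hfull : ∀ i ∈ Finset.Icc 1 k, ∀ j ∈ Finset.Icc 1 n, (S i j).isSome)
    (hcount :
      ((Finset.Icc 1 n).filter (fun j => (S (k + 1) j).isSome)).card ≤ n - 2 * k)
    (hempty : ∀ i, k + 1 < i → ∀ j, S i j = none) :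
    ∃ S' : ℕ → ℕ → Option ℕ, IsPLS n S' ∧
      (∀ i j s, S i j = some s → S' i j = some s) ∧
      (∀ i ∈ Finset.Icc 1 (k + 1), ∀ j ∈ Finset.Icc 1 n, (S' i j).isSome) := by
  have hE := card_emptyCells_add_card_filter_isSome (n := n) (S := S) (k + 1)
  have hR := card_rowSymbols_le (n := n) (S := S) (k + 1)
  obtain ⟨f, hf, hfmem⟩ := exists_injective_forall_mem_sdiff (Icc 1 n) (rowSymbols n S (k + 1))
    (fun j : emptyCells n S (k + 1) => colSymbols k S j) k (fun j => card_colSymbols_le k j)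
    (hS.card_filter_mem_colSymbols_le Subtype.val_injective k)
    (by simp only [Nat.card_Icc]; omega) (by simp only [Fintype.card_coe, Nat.card_Icc]; omega)
  simp only [mem_sdiff, mem_union, not_or] at hfmem
  refine ⟨fillRow S (k + 1) f, ?_, fun i j s h => fillRow_emptyCells_eq_of_eq_some f h, ?_⟩
  · refine hS.fillRow (mem_Icc.2 ⟨by omega, by omega⟩) (filter_subset _ _) hf
      (fun j => (hfmem j).1) (fun j => (hfmem j).2.1) fun j i h => (hfmem j).2.2 ?_
    exact hS.mem_colSymbols_of_mem_emptyCells hempty j.2 h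
  · intro i hi j hj
    obtain rfl | hik : i = k + 1 ∨ i ∈ Icc 1 k := by simp only [mem_Icc] at hi ⊢; omega
    · exact isSome_fillRow_emptyCells f hj
    · obtain ⟨s, hs⟩ := Option.isSome_iff_exists.1 (hfull i hik j hj)
      simp [fillRow_emptyCells_eq_of_eq_some f hs]

/-- If `1 ≤ k < n/2` and `S` is a partial latin square of order `n` whose first
`k` rows are filled, whose row `k+1` has at most `n − 2k` filled cells, and
which has no other filled cells, then `S` extends to a partial latin square
with the first `k+1` rows completely filled. -/
theorem pls_extend_row (n k : ℕ) (hk : 1 ≤ k) (hkn : 2 * k < n)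
    (S : ℕ → ℕ → Option ℕ) (hS : IsPLS n S)
    (hfull : ∀ i ∈ Finset.Icc 1 k, ∀ j ∈ Finset.Icc 1 n, (S i j).isSome)
    (hcount :
      ((Finset.Icc 1 n).filter (fun j => (S (k + 1) j).isSome)).card ≤ n - 2 * k)
    (hempty : ∀ i, k + 1 < i → ∀ j, S i j = none) :
    ∃ S' : ℕ → ℕ → Option ℕ, IsPLS n S' ∧
      (∀ i j s, S i j = some s → S' i j = some s) ∧
      (∀ i ∈ Finset.Icc 1 (k + 1), ∀ j ∈ Finset.Icc 1 n, (S' i j).isSome) :=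
  pls_extend_row_general n k hkn S hS hfull hcount hempty
end

section
/- For every n ≥ 2 and every k with ⌈n/2⌉ ≤ k ≤ n−2, there exists an n×n partial latin square whose first k rows are filled, with exactly 2 filled cells in row k+1 and no other filled cells, which cannot be extended to a partial latin square with the first k+1 rows completely filled. -/
open Finset

theorem exists_injective_mem_of_card_eq_of_degree_le {ι α : Type*} [Fintype ι] [DecidableEq α]
    (t : ι → Finset α) {d : ℕ} (hd : 0 < d) (ht : ∀ i, #(t i) = d)
    (hdeg : ∀ a, #{i | a ∈ t i} ≤ d) :
    ∃ f : ι → α, Function.Injective f ∧ ∀ i, f i ∈ t i := by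
  refine (all_card_le_biUnion_card_iff_exists_injective t).mp fun s => ?_
  refine Nat.le_of_mul_le_mul_right (card_mul_le_card_mul (fun i a => a ∈ t i) ?_ ?_) hd
  · intro i hi
    rw [bipartiteAbove, filter_mem_eq_inter, inter_eq_right.mpr (subset_biUnion_of_mem t hi), ht]
  · intro a _
    exact (card_le_card (filter_subset_filter _ (subset_univ s))).trans (hdeg a)

structure IsLatinRect (r n : ℕ) (M : ℕ → ℕ → ℕ) : Prop where
  mapsTo : ∀ i < r, Set.MapsTo (M i) (Set.Iio n) (Set.Iio n)
  row_injOn : ∀ i < r, Set.InjOn (M i) (Set.Iio n)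
  col_injOn : ∀ j < n, Set.InjOn (M · j) (Set.Iio r)

def absentSymbols (r n : ℕ) (M : ℕ → ℕ → ℕ) (j : ℕ) : Finset ℕ :=
  {v ∈ range n | ∀ i < r, M i j ≠ v}

namespace IsLatinRect

variable {r n : ℕ} {M : ℕ → ℕ → ℕ}

theorem exists_row_eq (h : IsLatinRect r n M) {i v : ℕ} (hi : i < r) (hv : v < n) :
    ∃ j < n, M i j = v :=
  ((Set.finite_Iio n).injOn_iff_bijOn_of_mapsTo (h.mapsTo i hi) |>.mp (h.row_injOn i hi)).surjOn hv

theorem exists_col_eq (h : IsLatinRect n n M) {j v : ℕ} (hj : j < n) (hv : v < n) :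
    ∃ i < n, M i j = v :=
  ((Set.finite_Iio n).injOn_iff_bijOn_of_mapsTo (fun i hi => h.mapsTo i hi hj) |>.mp
    (h.col_injOn j hj)).surjOn hv

theorem card_absentSymbols (h : IsLatinRect r n M) {j : ℕ} (hj : j < n) :
    #(absentSymbols r n M j) = n - r := by
  have : absentSymbols r n M j = range n \ (range r).image (M · j) := by
    ext v
    simp [absentSymbols]
  rw [this, card_sdiff_of_subset, card_range, card_image_of_injOn (by simpa using h.col_injOn j hj),
    card_range]
  intro v hv
  obtain ⟨i, hi, rfl⟩ := mem_image.mp hv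
  exact mem_range.mpr (h.mapsTo i (mem_range.mp hi) hj)

theorem card_filter_mem_absentSymbols_le (h : IsLatinRect r n M) (v : ℕ) :
    #{j : Fin n | v ∈ absentSymbols r n M j} ≤ n - r := by
  by_cases hv : v < n
  · have hpresent : r ≤ #{j : Fin n | v ∉ absentSymbols r n M j} := by
      simpa using card_le_card_of_forall_subsingleton (s := range r)
        (t := {j : Fin n | v ∉ absentSymbols r n M j}) (fun i (j : Fin n) => M i j = v)
        (fun i hi => by
          obtain ⟨j, hj, hij⟩ := h.exists_row_eq (mem_range.mp hi) hv
          exact ⟨⟨j, hj⟩, by simpa [absentSymbols] using fun _ => ⟨i, mem_range.mp hi, hij⟩, hij⟩)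
        (fun j _ i hi i' hi' => by
          simp only [mem_range, Set.mem_ofPred_eq] at hi hi'
          exact h.col_injOn j j.2 hi.1 hi'.1 (hi.2.trans hi'.2.symm))
    have := card_filter_add_card_filter_not (s := univ)
      (p := fun j : Fin n => v ∈ absentSymbols r n M j)
    simp only [card_univ, Fintype.card_fin] at this
    omega
  · simp [absentSymbols, hv]

theorem exists_row_extension (h : IsLatinRect r n M) (hr : r < n) :
    ∃ f : ℕ → ℕ, Set.MapsTo f (Set.Iio n) (Set.Iio n) ∧ Set.InjOn f (Set.Iio n) ∧
      ∀ i < r, ∀ j < n, f j ≠ M i j := by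
  obtain ⟨f, hinj, hf⟩ := exists_injective_mem_of_card_eq_of_degree_le
    (fun j : Fin n => absentSymbols r n M j) (by omega) (fun j => h.card_absentSymbols j.2)
    h.card_filter_mem_absentSymbols_le
  have hf' : ∀ j : Fin n, f j < n ∧ ∀ i < r, M i j ≠ f j := by simpa [absentSymbols] using hf
  refine ⟨fun j => if hj : j < n then f ⟨j, hj⟩ else 0, fun j (hj : j < n) => ?_,
    fun j (hj : j < n) j' (hj' : j' < n) hjj' => ?_, fun i hi j hj => ?_⟩
  · simpa [dif_pos hj] using (hf' ⟨j, hj⟩).1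
  · simpa using @hinj ⟨j, hj⟩ ⟨j', hj'⟩ (by simpa [dif_pos hj, dif_pos hj'] using hjj')
  · simpa [dif_pos hj] using ((hf' ⟨j, hj⟩).2 i hi).symm

theorem update (h : IsLatinRect r n M) {f : ℕ → ℕ} (hmaps : Set.MapsTo f (Set.Iio n) (Set.Iio n))
    (hinj : Set.InjOn f (Set.Iio n)) (hne : ∀ i < r, ∀ j < n, f j ≠ M i j) :
    IsLatinRect (r + 1) n (Function.update M r f) := by
  refine ⟨fun i hi => ?_, fun i hi => ?_, fun j hj i hi i' hi' hii' => ?_⟩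
  · rcases eq_or_ne i r with rfl | hir
    · simpa using hmaps
    · simpa [hir] using h.mapsTo i (by omega)
  · rcases eq_or_ne i r with rfl | hir
    · simpa using hinj
    · simpa [hir] using h.row_injOn i (by omega)
  · simp only [Set.mem_Iio, Function.update_apply] at hi hi' hii'
    split_ifs at hii' with hir hi'r hi'r
    · exact hir.trans hi'r.symm
    · exact absurd hii' (hne i' (by omega) j hj)
    · exact absurd hii'.symm (hne i (by omega) j hj)
    · exact h.col_injOn j hj (show i < r by omega) (show i' < r by omega) hii'

theorem comp_add {s : ℕ} (h : IsLatinRect (s + r) n M) : IsLatinRect s n (fun i => M (i + r)) :=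
  ⟨fun i hi => h.mapsTo _ (by omega), fun i hi => h.row_injOn _ (by omega),
    fun j hj i (hi : i < s) i' (hi' : i' < s) hii' => by
      simpa using
        h.col_injOn j hj (show i + r < s + r by omega) (show i' + r < s + r by omega) hii'⟩

theorem exists_square (h : IsLatinRect r n M) (hr : r ≤ n) :
    ∃ M', IsLatinRect n n M' ∧ ∀ i < r, M' i = M i := by
  induction hd : n - r generalizing r M with
  | zero => exact ⟨M, (show r = n by omega) ▸ h, fun _ _ => rfl⟩
  | succ d ih =>
    obtain ⟨f, hmaps, hinj, hne⟩ := h.exists_row_extension (by omega)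
    obtain ⟨M', hM', hagree⟩ := ih (h.update hmaps hinj hne) (by omega) (by omega)
    exact ⟨M', hM', fun i hi => by
      rw [hagree i (by omega), Function.update_of_ne (by omega)]⟩

end IsLatinRect

/-- The first `m - 1` columns hold the cyclic latin rectangle `(j - r) mod m`. On the last
`k + 1` columns, row `r` is row `r` of the cyclic square of order `k + 1`, with entry
`t = (j - (m - 1) + r) mod (k + 1)` written as `m - 1 + t`, except that `t = 0` is replaced by
`m - 1 - r`, the symbol missing from row `r` in the first block. -/
def seedRect (k m r j : ℕ) : ℕ :=
  if j + 1 < m then (if r ≤ j then j - r else j + m - r)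
  else
    if (if j + r < k + m then j + r + 1 - m else j + r - (k + m)) = 0 then m - 1 - r
    else m - 1 + (if j + r < k + m then j + r + 1 - m else j + r - (k + m))

theorem isLatinRect_seedRect {k m : ℕ} (hmk : m ≤ k) : IsLatinRect m (k + m) (seedRect k m) := by
  refine ⟨fun r hr j (hj : j < k + m) => ?_,
    fun r hr j (hj : j < k + m) j' (hj' : j' < k + m) h => ?_,
    fun j hj r (hr : r < m) r' (hr' : r' < m) h => ?_⟩ <;>
  simp only [seedRect, Set.mem_Iio] at * <;> split_ifs at * <;> omega

theorem seedRect_lt {k m r j : ℕ} (hr : r < m) (hj : j + 1 < m) : seedRect k m r j < m := by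
  unfold seedRect; split_ifs <;> omega

theorem seedRect_zero {k m : ℕ} (hm : 0 < m) : seedRect k m 0 (m - 1) = m - 1 := by
  unfold seedRect; split_ifs <;> omega

theorem seedRect_one {k m : ℕ} (hm : 2 ≤ m) : seedRect k m 1 (k + m - 1) = m - 2 := by
  unfold seedRect; split_ifs <;> omega

theorem exists_latinRect_cols_complete {k m : ℕ} (hm : 2 ≤ m) (hmk : m ≤ k) :
    ∃ L, IsLatinRect k (k + m) L ∧
      (∀ j < m - 1, ∀ v, m ≤ v → v < k + m → ∃ i < k, L i j = v) ∧
      (∀ i < k, L i (m - 1) ≠ m - 1) ∧ ∀ i < k, L i (k + m - 1) ≠ m - 2 := by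
  obtain ⟨M, hM, hseed⟩ := (isLatinRect_seedRect hmk).exists_square (by omega)
  refine ⟨fun i => M (i + m), hM.comp_add, fun j hj v hmv hv => ?_,
    fun i hi (h : M (i + m) _ = _) => ?_, fun i hi (h : M (i + m) _ = _) => ?_⟩
  · obtain ⟨i, hi, rfl⟩ := hM.exists_col_eq (show j < k + m by omega) hv
    have : m ≤ i := by
      by_contra! him
      have := seedRect_lt (k := k) him (show j + 1 < m by omega)
      rw [hseed i him] at hmv
      omega
    exact ⟨i - m, by omega, by simp only [Nat.sub_add_cancel this]⟩
  · have := hM.col_injOn (m - 1) (by omega) (show i + m < k + m by omega)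
      (show 0 < k + m by omega)
      (by simp only [h, hseed 0 (by omega), seedRect_zero (show 0 < m by omega)])
    omega
  · have := hM.col_injOn (k + m - 1) (by omega) (show i + m < k + m by omega)
      (show 1 < k + m by omega) (by simp only [h, hseed 1 (by omega), seedRect_one hm])
    omega

def rectWithTwoCells (k n : ℕ) (L : ℕ → ℕ → ℕ) (c₁ s₁ c₂ s₂ : ℕ) (i j : ℕ) : Option ℕ :=
  if 1 ≤ i ∧ i ≤ k ∧ 1 ≤ j ∧ j ≤ n then some (L (i - 1) (j - 1) + 1)
  else if i = k + 1 ∧ j = c₁ then some s₁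
  else if i = k + 1 ∧ j = c₂ then some s₂
  else none

section rectWithTwoCells

variable {k n : ℕ} {L : ℕ → ℕ → ℕ} {c₁ s₁ c₂ s₂ : ℕ}

theorem rectWithTwoCells_cases_of_eq_some {i j s : ℕ}
    (h : rectWithTwoCells k n L c₁ s₁ c₂ s₂ i j = some s) :
    (1 ≤ i ∧ i ≤ k ∧ 1 ≤ j ∧ j ≤ n ∧ s = L (i - 1) (j - 1) + 1) ∨
      (i = k + 1 ∧ j = c₁ ∧ s = s₁) ∨ (i = k + 1 ∧ j = c₂ ∧ s = s₂) := by
  unfold rectWithTwoCells at h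
  split_ifs at h <;> grind

theorem rectWithTwoCells_of_le {i j : ℕ} (hi : 1 ≤ i) (hik : i ≤ k) (hj : 1 ≤ j) (hjn : j ≤ n) :
    rectWithTwoCells k n L c₁ s₁ c₂ s₂ i j = some (L (i - 1) (j - 1) + 1) :=
  if_pos ⟨hi, hik, hj, hjn⟩

theorem rectWithTwoCells_first_cell :
    rectWithTwoCells k n L c₁ s₁ c₂ s₂ (k + 1) c₁ = some s₁ := by
  simp [rectWithTwoCells]

theorem rectWithTwoCells_second_cell (hc : c₁ ≠ c₂) :
    rectWithTwoCells k n L c₁ s₁ c₂ s₂ (k + 1) c₂ = some s₂ := by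
  simp [rectWithTwoCells, hc.symm]

theorem rectWithTwoCells_eq_none {i j : ℕ} (hi : k + 1 < i) :
    rectWithTwoCells k n L c₁ s₁ c₂ s₂ i j = none := by
  simp only [rectWithTwoCells]
  split_ifs <;> first | rfl | omega

theorem card_filter_rectWithTwoCells_isSome (hc : c₁ ≠ c₂) (hc₁ : c₁ ∈ Icc 1 n)
    (hc₂ : c₂ ∈ Icc 1 n) :
    #{j ∈ Icc 1 n | (rectWithTwoCells k n L c₁ s₁ c₂ s₂ (k + 1) j).isSome} = 2 := by
  have : {j ∈ Icc 1 n | (rectWithTwoCells k n L c₁ s₁ c₂ s₂ (k + 1) j).isSome} = {c₁, c₂} := by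
    ext j
    by_cases h₁ : j = c₁ <;> by_cases h₂ : j = c₂ <;> simp_all [rectWithTwoCells]
  rw [this, card_pair hc]

theorem isPLS_rectWithTwoCells (hL : IsLatinRect k n L) (hk : k < n) (hs : s₁ ≠ s₂)
    (hc₁ : c₁ ∈ Icc 1 n) (hc₂ : c₂ ∈ Icc 1 n) (hs₁ : s₁ ∈ Icc 1 n) (hs₂ : s₂ ∈ Icc 1 n)
    (hL₁ : ∀ i < k, L i (c₁ - 1) + 1 ≠ s₁) (hL₂ : ∀ i < k, L i (c₂ - 1) + 1 ≠ s₂) :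
    IsPLS n (rectWithTwoCells k n L c₁ s₁ c₂ s₂) := by
  simp only [mem_Icc] at hc₁ hc₂ hs₁ hs₂
  have cases := @rectWithTwoCells_cases_of_eq_some k n L c₁ s₁ c₂ s₂
  refine ⟨fun i j s h => ?_, fun i j j' s h h' => ?_, fun i i' j s h h' => ?_⟩
  · simp only [mem_Icc]
    rcases cases h with ⟨_, _, _, _, rfl⟩ | ⟨_, rfl, rfl⟩ | ⟨_, rfl, rfl⟩
    · have := hL.mapsTo (i - 1) (by omega) (show j - 1 < n by omega)
      simp only [Set.mem_Iio] at this
      omega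
    all_goals omega
  · rcases cases h with ⟨_, _, _, _, hs⟩ | ⟨_, hj, hs⟩ | ⟨_, hj, hs⟩ <;>
      rcases cases h' with ⟨_, _, _, _, hs'⟩ | ⟨_, hj', hs'⟩ | ⟨_, hj', hs'⟩ <;> try omega
    have := hL.row_injOn (i - 1) (by omega) (show j - 1 < n by omega) (show j' - 1 < n by omega)
      (by omega)
    omega
  · rcases cases h with ⟨_, _, _, _, hs⟩ | ⟨_, hj, hs⟩ | ⟨_, hj, hs⟩ <;>
      rcases cases h' with ⟨_, _, _, _, hs'⟩ | ⟨_, hj', hs'⟩ | ⟨_, hj', hs'⟩ <;>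
      subst_vars <;> try omega
    · have := hL.col_injOn (j - 1) (by omega) (show i - 1 < k by omega)
        (show i' - 1 < k by omega) (by simpa using hs')
      omega
    all_goals first
      | exact absurd rfl (hL₁ _ (by omega))
      | exact absurd rfl (hL₂ _ (by omega))

end rectWithTwoCells

theorem not_exists_fill_row {n x c₁ c₂ s₁ s₂ : ℕ} {S : ℕ → ℕ → Option ℕ} {J P : Finset ℕ}
    (hc₁ : c₁ ∉ J) (hc₂ : c₂ ∉ J) (hs₁ : s₁ ∈ P) (hs₂ : s₂ ∈ P) (hs : s₁ ≠ s₂)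
    (hJP : #P < #J + 2) (h₁ : S x c₁ = some s₁) (h₂ : S x c₂ = some s₂)
    (hcol : ∀ j ∈ J, ∀ s ∈ Icc 1 n, s ∉ P → ∃ i ≠ x, S i j = some s) :
    ¬ ∃ S', IsPLS n S' ∧ (∀ i j s, S i j = some s → S' i j = some s) ∧
      ∀ j ∈ J, (S' x j).isSome := by
  rintro ⟨S', ⟨hbound, hrow, hcol'⟩, hext, hfill⟩
  have hval : ∀ j ∈ J, S' x j = some ((S' x j).getD 0) := fun j hj => by
    obtain ⟨s, hs⟩ := Option.isSome_iff_exists.mp (hfill j hj)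
    simp [hs]
  have hmaps : ∀ j ∈ J, (S' x j).getD 0 ∈ (P.erase s₁).erase s₂ := by
    intro j hj
    have hne (c s) (hc : c ∉ J) (h : S x c = some s) : (S' x j).getD 0 ≠ s := fun he =>
      hc (hrow x c j s (hext _ _ _ h) (he ▸ hval j hj) ▸ hj)
    have hP : (S' x j).getD 0 ∈ P := by
      by_contra hsP
      obtain ⟨i, hix, hi⟩ := hcol j hj _ (hbound x j _ (hval j hj)).2.2 hsP
      exact hix (hcol' i x j _ (hext _ _ _ hi) (hval j hj))
    simp [hne c₁ s₁ hc₁ h₁, hne c₂ s₂ hc₂ h₂, hP]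
  have := card_le_card_of_injOn _ hmaps fun a ha b hb hab =>
    hrow x a b _ (hval a ha) (hab ▸ hval b hb)
  rw [card_erase_of_mem (mem_erase.mpr ⟨hs.symm, hs₂⟩), card_erase_of_mem hs₁] at this
  have : 1 < #P := one_lt_card.mpr ⟨s₁, hs₁, s₂, hs₂, hs⟩
  omega

/-- For every `n ≥ 2` and `⌈n/2⌉ ≤ k ≤ n − 2` there is a partial latin square
of order `n` with the first `k` rows filled, exactly two filled cells in row
`k+1` and no other filled cells, which cannot be extended to a partial latin
square whose first `k+1` rows are completely filled.  (This says
`f_{k,n} = 1` in this range.) -/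
theorem exists_nonextendable_pls (n k : ℕ) (hn : 2 ≤ n)
    (hk1 : (n + 1) / 2 ≤ k) (hk2 : k ≤ n - 2) :
    ∃ S : ℕ → ℕ → Option ℕ, IsPLS n S ∧
      (∀ i ∈ Finset.Icc 1 k, ∀ j ∈ Finset.Icc 1 n, (S i j).isSome) ∧
      ((Finset.Icc 1 n).filter (fun j => (S (k + 1) j).isSome)).card = 2 ∧
      (∀ i, k + 1 < i → ∀ j, S i j = none) ∧
      ¬ ∃ S' : ℕ → ℕ → Option ℕ, IsPLS n S' ∧
          (∀ i j s, S i j = some s → S' i j = some s) ∧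
          (∀ i ∈ Finset.Icc 1 (k + 1), ∀ j ∈ Finset.Icc 1 n,
            (S' i j).isSome) := by
  obtain ⟨m, rfl, hm, hmk⟩ : ∃ m, n = k + m ∧ 2 ≤ m ∧ m ≤ k :=
    ⟨n - k, by omega, by omega, by omega⟩
  obtain ⟨L, hL, hfull, hL₁, hL₂⟩ := exists_latinRect_cols_complete hm hmk
  have hc : m ≠ k + m := by omega
  set S := rectWithTwoCells k (k + m) L m m (k + m) (m - 1)
  have hcol : ∀ j ∈ Icc 1 (m - 1), ∀ s ∈ Icc 1 (k + m), s ∉ Icc 1 m →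
      ∃ i ≠ k + 1, S i j = some s := by
    intro j hj s hs hsP
    simp only [mem_Icc] at hj hs hsP
    obtain ⟨i, hi, hLi⟩ := hfull (j - 1) (by omega) (s - 1) (by omega) (by omega)
    refine ⟨i + 1, by omega, ?_⟩
    calc S (i + 1) j = some (L i (j - 1) + 1) :=
          rectWithTwoCells_of_le (by omega) (by omega) hj.1 (by omega)
      _ = some s := by rw [hLi, Nat.sub_add_cancel hs.1]
  refine ⟨S, isPLS_rectWithTwoCells hL (by omega) (by omega) (by simp; omega) (by simp; omega)
      (by simp; omega) (by simp; omega) (fun i hi => by have := hL₁ i hi; omega)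
      (fun i hi => by have := hL₂ i hi; omega), fun i hi j hj => ?_,
    card_filter_rectWithTwoCells_isSome hc (by simp; omega) (by simp; omega),
    fun i hi j => rectWithTwoCells_eq_none hi, fun ⟨S', hS', hext, hfill⟩ => ?_⟩
  · simp only [mem_Icc] at hi hj
    simp [S, rectWithTwoCells_of_le hi.1 hi.2 hj.1 hj.2]
  · exact not_exists_fill_row (J := Icc 1 (m - 1)) (P := Icc 1 m) (by simp; omega)
      (by simp; omega) (by simp; omega) (by simp; omega) (by omega) (by simp; omega)
      rectWithTwoCells_first_cell (rectWithTwoCells_second_cell hc) hcol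
      ⟨S', hS', hext, fun j hj => hfill (k + 1) (by simp) j (by simp at hj ⊢; omega)⟩
end

section
/- Let M be an m×m matrix with nonnegative entries. Then per M = 0 if and only if M contains an r×s submatrix of zeros (given by choosing r rows and s columns) with r + s = m + 1. -/
/-!
With nonnegative entries the permanent vanishes iff every permutation `σ` meets a zero entry
`M i (σ i)`. An `r × s` zero block with `r + s > m` meets every permutation by pigeonhole.
Conversely, if every zero block has `r + s ≤ m`, then for any set `R` of rows the columns
outside the support of `R` form a zero block with `R`, so that support has at least `|R|`
columns: this is Hall's condition, and the resulting matching is a permutation avoiding all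
zeros.
-/

open Finset Equiv

namespace Matrix

variable {n α : Type*} [Fintype n]

theorem exists_apply_eq_zero_of_zero_block [Zero α] (M : Matrix n n α) {R S : Finset n}
    (hcard : Fintype.card n < #R + #S) (hzero : ∀ i ∈ R, ∀ j ∈ S, M i j = 0)
    (σ : Perm n) : ∃ i, M i (σ i) = 0 := by
  classical
  obtain ⟨j, hj⟩ := inter_nonempty_of_card_lt_card_add_card
    (subset_univ (R.map σ.toEmbedding)) (subset_univ S) (by simpa using hcard)
  obtain ⟨hjR, hjS⟩ := mem_inter.mp hj
  obtain ⟨i, hiR, rfl⟩ := mem_map.mp hjR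
  exact ⟨i, hzero i hiR _ hjS⟩

theorem exists_perm_forall_apply_ne_zero_of_zero_block_card_le [Zero α] (M : Matrix n n α)
    (hblock : ∀ R S : Finset n, (∀ i ∈ R, ∀ j ∈ S, M i j = 0) → #R + #S ≤ Fintype.card n) :
    ∃ σ : Perm n, ∀ i, M i (σ i) ≠ 0 := by
  classical
  have hall : ∀ R : Finset n, #R ≤ #{j | ∃ i ∈ R, M i j ≠ 0} := fun R => by
    set supp : Finset n := {j | ∃ i ∈ R, M i j ≠ 0}
    have hcompl := hblock R suppᶜ fun i hi j hj => by
      by_contra hij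
      exact mem_compl.mp hj (mem_filter.mpr ⟨mem_univ j, i, hi, hij⟩)
    have hsupp := card_le_univ supp
    rw [card_compl] at hcompl
    omega
  obtain ⟨f, hf, hfM⟩ :=
    (Fintype.all_card_le_filter_rel_iff_exists_injective (fun i j => M i j ≠ 0)).mp hall
  exact ⟨ofBijective f (Finite.injective_iff_bijective.mp hf), hfM⟩

theorem forall_exists_apply_eq_zero_iff_exists_zero_block [Zero α] (M : Matrix n n α) :
    (∀ σ : Perm n, ∃ i, M i (σ i) = 0) ↔
      ∃ R S : Finset n, #R + #S = Fintype.card n + 1 ∧ ∀ i ∈ R, ∀ j ∈ S, M i j = 0 := by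
  constructor
  · intro h
    by_contra hexact
    obtain ⟨σ, hσ⟩ := M.exists_perm_forall_apply_ne_zero_of_zero_block_card_le fun R S hzero => by
      by_contra! hcard
      have hS := card_le_univ S
      obtain ⟨R', hR'R, hR'⟩ := exists_subset_card_eq (s := R) (n := Fintype.card n + 1 - #S)
        (by omega)
      exact hexact ⟨R', S, by omega, fun i hi => hzero i (hR'R hi)⟩
    obtain ⟨i, hi⟩ := h σ
    exact hσ i hi
  · rintro ⟨R, S, hcard, hzero⟩
    exact M.exists_apply_eq_zero_of_zero_block (by omega) hzero

theorem permanent_eq_zero_iff_forall_exists_apply_eq_zero [DecidableEq n] [CommSemiring α]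
    [PartialOrder α] [IsOrderedRing α] [NoZeroDivisors α] [Nontrivial α] (M : Matrix n n α)
    (hM : ∀ i j, 0 ≤ M i j) :
    M.permanent = 0 ↔ ∀ σ : Perm n, ∃ i, M i (σ i) = 0 := by
  rw [← permanent_transpose, permanent,
    sum_eq_zero_iff_of_nonneg fun σ _ => prod_nonneg fun i _ => hM i (σ i)]
  simp only [transpose_apply, mem_univ, prod_eq_zero_iff, true_and, forall_const]

end Matrix

/-- Frobenius–König theorem: a square matrix `M` with nonnegative entries has
zero permanent iff it contains an `r × s` all-zero submatrix with
`r + s = m + 1`. -/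
theorem frobenius_koenig (m : ℕ) (M : Matrix (Fin m) (Fin m) ℝ)
    (hM : ∀ i j, 0 ≤ M i j) :
    (∑ τ : Equiv.Perm (Fin m), ∏ i : Fin m, M i (τ i)) = 0 ↔
      ∃ (R S : Finset (Fin m)), R.card + S.card = m + 1 ∧
        ∀ i ∈ R, ∀ j ∈ S, M i j = 0 := by
  have hperm : ∑ τ : Perm (Fin m), ∏ i, M i (τ i) = M.transpose.permanent := rfl
  rw [hperm, Matrix.permanent_transpose, M.permanent_eq_zero_iff_forall_exists_apply_eq_zero hM,
    M.forall_exists_apply_eq_zero_iff_exists_zero_block, Fintype.card_fin]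
end
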